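/- arXiv:2107.03737 — 2 statements merged into one kernel-verified Lean document; each statement's English description precedes it below -/
import Mathlib

section
/- Let N ≥ 3, a, b > 0, and 2* = 2N/(N-2). Define g(t) = ((1-t)a + t b)/N · [ ((1-t)a + t b) / ((1-t)^{2*/2} a + t^{2*/2} b) ]^{(N-2)/2} for t ∈ [0,1]. Then g attains its maximum on [0,1] at t = 1/2, and g(1/2) = (a + b)/N. -/
open Real

lemma gmp_half (n : ℝ) (hn : 3 ≤ n) (a b : ℝ) (ha : 0 < a) (hb : 0 < b) :
    ((1 - (1/2:ℝ)) * a + (1/2) * b) / n *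
      ((((1 - (1/2:ℝ)) * a + (1/2) * b) /
        ((1 - (1/2:ℝ)) ^ ((2*n/(n-2))/2) * a + (1/2:ℝ) ^ ((2*n/(n-2))/2) * b)) ^ ((n-2)/2))
    = (a + b) / n := by
  have hn2 : (0:ℝ) < n - 2 := by linarith
  set p : ℝ := (2*n/(n-2))/2 with hp
  have h12 : (0:ℝ) < 1/2 := by norm_num
  have e1 : (1 - (1/2:ℝ)) = 1/2 := by norm_num
  rw [e1]
  have e2 : (1/2:ℝ) * a + (1/2) * b = (1/2) * (a+b) := by ring
  have e3 : (1/2:ℝ) ^ p * a + (1/2:ℝ) ^ p * b = (1/2:ℝ)^p * (a+b) := by ring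
  rw [e2, e3]
  have hab : (0:ℝ) < a + b := by linarith
  have e4 : (1/2:ℝ) * (a+b) / ((1/2:ℝ)^p * (a+b)) = (1/2:ℝ) ^ (1 - p) := by
    rw [Real.rpow_sub h12, Real.rpow_one]
    field_simp
  rw [e4, ← Real.rpow_mul h12.le]
  have e5 : (1 - p) * ((n-2)/2) = -1 := by
    rw [hp]; field_simp; ring
  rw [e5, Real.rpow_neg_one]
  norm_num
  ring


lemma gmp_le (n : ℝ) (hn : 3 ≤ n) (a b : ℝ) (ha : 0 < a) (hb : 0 < b)
    (t : ℝ) (ht0 : 0 ≤ t) (ht1 : t ≤ 1) :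
    ((1-t)*a + t*b) / n *
      ((((1-t)*a + t*b) /
        ((1-t) ^ ((2*n/(n-2))/2) * a + t ^ ((2*n/(n-2))/2) * b)) ^ ((n-2)/2)) ≤ (a+b)/n := by
  have hn2 : (0:ℝ) < n - 2 := by linarith
  have hnpos : (0:ℝ) < n := by linarith
  set p : ℝ := (2*n/(n-2))/2 with hp
  have hpe : p = n/(n-2) := by rw [hp]; ring
  have hpinv : p⁻¹ = (n-2)/n := by rw [hpe, inv_div]
  have hp1 : 1 ≤ p := by rw [hpe, le_div_iff₀ hn2]; linarith
  set q : ℝ := (n-2)/2 with hq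
  have hq0 : (0:ℝ) ≤ q := by rw [hq]; linarith
  have hu0 : (0:ℝ) ≤ 1 - t := by linarith
  set s := (1-t)*a + t*b with hs
  set D := (1-t)^p * a + t^p * b with hD
  set A := a + b with hA
  have habA : (0:ℝ) < A := by rw [hA]; linarith
  have hs0 : 0 < s := by
    rcases eq_or_lt_of_le ht0 with h | h
    · rw [hs, ← h]; simpa using ha
    · have h1 : 0 < t*b := mul_pos h hb
      have h2 : 0 ≤ (1-t)*a := mul_nonneg hu0 ha.le
      rw [hs]; linarith
  have hD0 : 0 < D := by
    rcases eq_or_lt_of_le ht1 with h | h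
    · have h3 : (0:ℝ) ≤ (1-(1:ℝ))^p * a := mul_nonneg (Real.rpow_nonneg (by norm_num) p) ha.le
      rw [hD, h, Real.one_rpow]
      linarith
    · have h1 : 0 < (1-t)^p * a := mul_pos (Real.rpow_pos_of_pos (by linarith) p) ha
      have h2 : 0 ≤ t^p * b := mul_nonneg (Real.rpow_nonneg ht0 p) hb.le
      rw [hD]; linarith
  set M := A ^ (1 - p⁻¹) * D ^ p⁻¹ with hM
  have hM0 : 0 ≤ M := mul_nonneg (Real.rpow_nonneg habA.le _) (Real.rpow_nonneg hD0.le _)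
  have holder : s ≤ M := by
    have h := Real.inner_le_weight_mul_Lp_of_nonneg (Finset.univ : Finset (Fin 2)) hp1
      ![a, b] ![1-t, t]
      (by intro i; fin_cases i <;> simp [ha.le, hb.le])
      (by intro i; fin_cases i <;> simp [hu0, ht0])
    simp only [Fin.sum_univ_two, Matrix.cons_val_zero, Matrix.cons_val_one, Matrix.head_cons] at h
    calc s = a*(1-t) + b*t := by rw [hs]; ring
    _ ≤ (a+b)^(1-p⁻¹) * (a*(1-t)^p + b*t^p)^p⁻¹ := h
    _ = M := by rw [hM, hA]; congr 1; congr 1; ring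
  have e1 : M/D = A^(1-p⁻¹) * D^(p⁻¹ - 1) := by
    rw [Real.rpow_sub hD0, Real.rpow_one, hM, mul_div_assoc]
  have e2 : (M/D)^q = A^((1-p⁻¹)*q) * D^((p⁻¹-1)*q) := by
    rw [e1, Real.mul_rpow (Real.rpow_nonneg habA.le _) (Real.rpow_nonneg hD0.le _),
      ← Real.rpow_mul habA.le, ← Real.rpow_mul hD0.le]
  have hne1 : n ≠ 0 := hnpos.ne'
  have hne2 : n - 2 ≠ 0 := hn2.ne'
  have e3 : M * (M/D)^q = A^((1-p⁻¹) + (1-p⁻¹)*q) * D^(p⁻¹ + (p⁻¹-1)*q) := by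
    rw [e2, hM, Real.rpow_add habA, Real.rpow_add hD0]
    ring
  have eα : (1-p⁻¹) + (1-p⁻¹)*q = 1 := by
    rw [hpinv, hq]; field_simp; ring
  have eβ : p⁻¹ + (p⁻¹-1)*q = 0 := by
    rw [hpinv, hq]; field_simp; ring
  have key : s * (s/D)^q ≤ A := by
    calc s * (s/D)^q ≤ M * (M/D)^q := by
          have h1 : s/D ≤ M/D := by gcongr
          have h2 : (s/D)^q ≤ (M/D)^q :=
            Real.rpow_le_rpow (div_nonneg hs0.le hD0.le) h1 hq0
          exact mul_le_mul holder h2 (Real.rpow_nonneg (div_nonneg hs0.le hD0.le) q) hM0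
    _ = A := by rw [e3, eα, eβ, Real.rpow_one, Real.rpow_zero, mul_one]
  calc s / n * (s/D)^q = s * (s/D)^q / n := by ring
  _ ≤ A/n := by gcongr

/-- The function `g` from the Mountain–Pass upper bound. -/
noncomputable def gMP (N : ℕ) (a b t : ℝ) : ℝ :=
  ((1 - t) * a + t * b) / (N : ℝ) *
    (((1 - t) * a + t * b) /
      ((1 - t) ^ ((2 * (N : ℝ) / ((N : ℝ) - 2)) / 2) * a
        + t ^ ((2 * (N : ℝ) / ((N : ℝ) - 2)) / 2) * b)) ^ (((N : ℝ) - 2) / 2)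

theorem stmt_14 (N : ℕ) (hN : 3 ≤ N) (a b : ℝ) (ha : 0 < a) (hb : 0 < b) :
    (∀ t ∈ Set.Icc (0 : ℝ) 1, gMP N a b t ≤ gMP N a b (1 / 2)) ∧
    gMP N a b (1 / 2) = (a + b) / (N : ℝ) := by
  have hn : (3:ℝ) ≤ (N:ℝ) := by exact_mod_cast hN
  have half : gMP N a b (1/2) = (a+b)/(N:ℝ) := by
    simp only [gMP]; exact gmp_half (N:ℝ) hn a b ha hb
  refine ⟨fun t ht => ?_, half⟩
  rw [half]
  simp only [gMP]
  exact gmp_le (N:ℝ) hn a b ha hb t ht.1 ht.2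
end

section
/- Let N ≥ 3, S(λ₁) > 0, ν > 0, α ≥ 2, β > 1, h bounded with ‖h‖_∞ =: H, and let σ₁, σ₂ > 0 satisfy σ₁ + σ₂ < S(λ₂)^{N/2} and S(λ₁) σ₁^{(N-2)/N} ≤ σ₁ + ν α H (S(λ₂))^{β(N-2)/4} σ₁^{(α/2)(N-2)/N}. Then for every ε > 0 there exists ν̃ > 0 such that if 0 < ν < ν̃ then σ₁ > (1-ε) S(λ₁)^{N/2}. -/
/-!
Write `θ = (N-2)/N` and `γ = (α/2) θ ≥ θ`. Since `σ₁ < S(λ₂)^{N/2} =: M`, the perturbation term is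
at most `ν C σ₁^θ` with `C = α H S(λ₂)^{β(N-2)/4} M^{γ-θ}`, so the inequality gives
`S(λ₁) - ν C ≤ σ₁^{1-θ} = σ₁^{2/N}`, i.e. `σ₁ ≥ (S(λ₁) - ν C)^{N/2}`. The right-hand side tends
to `S(λ₁)^{N/2}` as `ν → 0`, hence exceeds `(1-ε) S(λ₁)^{N/2}` for small `ν`.
-/

open Filter Topology

namespace Real

theorem sub_mul_rpow_sub_le_rpow_one_sub {A D M θ γ σ : ℝ} (hγ : θ ≤ γ) (hσ : 0 < σ)
    (hσM : σ ≤ M) (hD : 0 ≤ D) (h : A * σ ^ θ ≤ σ + D * σ ^ γ) :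
    A - D * M ^ (γ - θ) ≤ σ ^ (1 - θ) := by
  have hσθ : 0 < σ ^ θ := rpow_pos_of_pos hσ θ
  have hsplit : σ ^ γ = σ ^ θ * σ ^ (γ - θ) := by rw [← rpow_add hσ]; ring_nf
  have hσ_eq : σ = σ ^ θ * σ ^ (1 - θ) := by rw [← rpow_add hσ]; simp
  have hpow : σ ^ (γ - θ) ≤ M ^ (γ - θ) := rpow_le_rpow hσ.le hσM (sub_nonneg.2 hγ)
  refine le_of_mul_le_mul_left ?_ hσθ
  calc σ ^ θ * (A - D * M ^ (γ - θ)) ≤ σ ^ θ * A - D * σ ^ γ := by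
        rw [hsplit]; nlinarith [mul_le_mul_of_nonneg_left hpow (mul_nonneg hD hσθ.le)]
    _ ≤ σ := by linarith
    _ = σ ^ θ * σ ^ (1 - θ) := hσ_eq

theorem rpow_inv_one_sub_le_of_le_add_mul_rpow {A D M θ γ σ : ℝ} (hθ : θ < 1) (hγ : θ ≤ γ)
    (hσ : 0 < σ) (hσM : σ ≤ M) (hD : 0 ≤ D) (hA : 0 ≤ A - D * M ^ (γ - θ))
    (h : A * σ ^ θ ≤ σ + D * σ ^ γ) :
    (A - D * M ^ (γ - θ)) ^ (1 - θ)⁻¹ ≤ σ := by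
  calc (A - D * M ^ (γ - θ)) ^ (1 - θ)⁻¹ ≤ (σ ^ (1 - θ)) ^ (1 - θ)⁻¹ :=
        rpow_le_rpow hA (sub_mul_rpow_sub_le_rpow_one_sub hγ hσ hσM hD h)
          (inv_nonneg.2 (sub_nonneg.2 hθ.le))
    _ = σ := rpow_rpow_inv hσ.le (sub_ne_zero.2 hθ.ne')

theorem eventually_lt_sub_mul_rpow {A ε : ℝ} (hA : 0 < A) (hε : 0 < ε) (C p : ℝ) :
    ∀ᶠ ν in 𝓝 0, 0 ≤ A - ν * C ∧ (1 - ε) * A ^ p < (A - ν * C) ^ p := by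
  have hlim : Tendsto (fun ν : ℝ => A - ν * C) (𝓝 0) (𝓝 A) := by
    have hcont : Continuous fun ν : ℝ => A - ν * C := by fun_prop
    simpa using hcont.tendsto 0
  have hlt : (1 - ε) * A ^ p < A ^ p := by nlinarith [rpow_pos_of_pos hA p]
  exact (hlim.eventually (lt_mem_nhds hA)).mono (fun _ h => h.le) |>.and
    ((hlim.rpow_const (Or.inl hA.ne')).eventually (lt_mem_nhds hlt))

end Real

theorem stmt_17_general (N : ℕ) (hN : 3 ≤ N) (Sl1 Sl2 α β H : ℝ)
    (hS1 : 0 < Sl1) (hS2 : 0 < Sl2) (hα : 2 ≤ α) (hH : 0 < H) :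
    ∀ ε > (0 : ℝ), ∃ ν' > (0 : ℝ), ∀ ν σ1 σ2 : ℝ, 0 < ν → ν < ν' →
      0 < σ1 → 0 < σ2 →
      σ1 + σ2 < Sl2 ^ ((N : ℝ) / 2) →
      Sl1 * σ1 ^ (((N : ℝ) - 2) / (N : ℝ))
        ≤ σ1 + ν * α * H * Sl2 ^ (β * ((N : ℝ) - 2) / 4)
            * σ1 ^ ((α / 2) * (((N : ℝ) - 2) / (N : ℝ))) →
      σ1 > (1 - ε) * Sl1 ^ ((N : ℝ) / 2) := by
  intro ε hε
  set θ : ℝ := ((N : ℝ) - 2) / N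
  set γ : ℝ := α / 2 * θ
  set M : ℝ := Sl2 ^ ((N : ℝ) / 2)
  set B : ℝ := α * H * Sl2 ^ (β * ((N : ℝ) - 2) / 4)
  have hN' : (3 : ℝ) ≤ N := by exact_mod_cast hN
  have hθ : θ < 1 := by rw [div_lt_one (by linarith)]; linarith
  have hγ : θ ≤ γ := le_mul_of_one_le_left (div_nonneg (by linarith) (by linarith)) (by linarith)
  have hexp : (1 - θ)⁻¹ = (N : ℝ) / 2 := by
    have : 1 - θ = 2 / N := by simp only [θ]; field_simp; ring
    rw [this, inv_div]
  have hB : 0 ≤ B := by positivity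
  obtain ⟨ν', hν', hsmall⟩ := Metric.eventually_nhds_iff.1
    (Real.eventually_lt_sub_mul_rpow hS1 hε (B * M ^ (γ - θ)) ((N : ℝ) / 2))
  refine ⟨ν', hν', fun ν σ1 σ2 hν hνν' hσ1 hσ2 hsum h => ?_⟩
  have hD : ν * α * H * Sl2 ^ (β * ((N : ℝ) - 2) / 4) = ν * B := by ring
  rw [hD] at h
  obtain ⟨hpos, hlt⟩ := hsmall (by rwa [Real.dist_0_eq_abs, abs_of_pos hν])
  rw [← mul_assoc] at hpos hlt
  have key := Real.rpow_inv_one_sub_le_of_le_add_mul_rpow hθ hγ hσ1 (by linarith)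
    (mul_nonneg hν.le hB) hpos h
  rw [hexp] at key
  linarith

/-- `Sl1 = S(λ₁)`, `Sl2 = S(λ₂)`, `H = ‖h‖_∞`, `σ1 = ∫ũ^{2*}`, `σ2 = ∫ṽ^{2*}`. -/
theorem stmt_17 (N : ℕ) (hN : 3 ≤ N) (Sl1 Sl2 α β H : ℝ)
    (hS1 : 0 < Sl1) (hS2 : 0 < Sl2) (hα : 2 ≤ α) (hβ : 1 < β) (hH : 0 < H) :
    ∀ ε > (0 : ℝ), ∃ ν' > (0 : ℝ), ∀ ν σ1 σ2 : ℝ, 0 < ν → ν < ν' →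
      0 < σ1 → 0 < σ2 →
      σ1 + σ2 < Sl2 ^ ((N : ℝ) / 2) →
      Sl1 * σ1 ^ (((N : ℝ) - 2) / (N : ℝ))
        ≤ σ1 + ν * α * H * Sl2 ^ (β * ((N : ℝ) - 2) / 4)
            * σ1 ^ ((α / 2) * (((N : ℝ) - 2) / (N : ℝ))) →
      σ1 > (1 - ε) * Sl1 ^ ((N : ℝ) / 2) :=
  stmt_17_general N hN Sl1 Sl2 α β H hS1 hS2 hα hH
end
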